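/- Suppose a loss functional decomposes over orders as I = Σ_{q=0}^{s} C(s,q) J(q) with all J(q) ≥ 0, and dropout with keep-probability p replaces s by r ~ Binomial(s,p). Then the expected dropped interaction E_r[Σ_{q=0}^{r} C(r,q) J(q)] ≤ Σ_{q=0}^{s} C(s,q) J(q), with equality when p = 1. -/

import Mathlib

/-!
When `J ≥ 0`, the total interaction `∑_{q ≤ r} C(r,q) J(q)` is monotone in `r`, because
`C(r,q) ≤ C(s,q)` for `r ≤ s` and the longer sum only adds nonnegative terms. The dropped order
`r ~ Binomial(s, p)` never exceeds `s`, so the average of a monotone function against the binomial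
weights, which sum to `1`, is at most its value at `s`; for `p = 1` all the mass sits at `r = s`.
-/

open BigOperators Finset

section BinomialAverage

variable {R : Type*}

theorem sum_range_choose_mul_pow_mul_pow_eq_one [CommRing R] (s : ℕ) (p : R) :
    ∑ r ∈ range (s + 1), (s.choose r : R) * p ^ r * (1 - p) ^ (s - r) = 1 := by
  calc ∑ r ∈ range (s + 1), (s.choose r : R) * p ^ r * (1 - p) ^ (s - r)
      = (p + (1 - p)) ^ s := by
        rw [add_pow]
        exact sum_congr rfl fun r _ => by ring
    _ = 1 := by rw [add_sub_cancel, one_pow]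

theorem choose_mul_pow_mul_pow_nonneg [CommRing R] [PartialOrder R] [IsOrderedRing R]
    (s r : ℕ) {p : R} (hp0 : 0 ≤ p) (hp1 : p ≤ 1) :
    0 ≤ (s.choose r : R) * p ^ r * (1 - p) ^ (s - r) := by
  have := pow_nonneg (sub_nonneg.mpr hp1) (s - r)
  have := pow_nonneg hp0 r
  positivity

theorem sum_binomial_mul_le_of_monotone [CommRing R] [PartialOrder R] [IsOrderedRing R]
    (s : ℕ) {p : R} (hp0 : 0 ≤ p) (hp1 : p ≤ 1) {f : ℕ → R} (hf : Monotone f) :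
    ∑ r ∈ range (s + 1), (s.choose r : R) * p ^ r * (1 - p) ^ (s - r) * f r ≤ f s := by
  calc ∑ r ∈ range (s + 1), (s.choose r : R) * p ^ r * (1 - p) ^ (s - r) * f r
      ≤ ∑ r ∈ range (s + 1), (s.choose r : R) * p ^ r * (1 - p) ^ (s - r) * f s := by
        refine sum_le_sum fun r hr => ?_
        exact mul_le_mul_of_nonneg_left (hf (Nat.lt_succ_iff.mp (mem_range.mp hr)))
          (choose_mul_pow_mul_pow_nonneg s r hp0 hp1)
    _ = f s := by rw [← sum_mul, sum_range_choose_mul_pow_mul_pow_eq_one, one_mul]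

theorem sum_binomial_one_mul [CommRing R] (s : ℕ) (f : ℕ → R) :
    ∑ r ∈ range (s + 1), (s.choose r : R) * 1 ^ r * (1 - 1) ^ (s - r) * f r = f s := by
  rw [sum_eq_single_of_mem s (self_mem_range_succ s)]
  · simp
  · intro r hr hne
    have : s - r ≠ 0 := by have := mem_range.mp hr; omega
    simp [zero_pow this]

end BinomialAverage

theorem monotone_sum_range_choose_mul {J : ℕ → ℝ} (hJ : ∀ q, 0 ≤ J q) :
    Monotone fun r => ∑ q ∈ range (r + 1), (r.choose q : ℝ) * J q := by
  intro r s hrs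
  calc ∑ q ∈ range (r + 1), (r.choose q : ℝ) * J q
      ≤ ∑ q ∈ range (r + 1), (s.choose q : ℝ) * J q := by
        refine sum_le_sum fun q _ => ?_
        exact mul_le_mul_of_nonneg_right (by exact_mod_cast Nat.choose_le_choose q hrs) (hJ q)
    _ ≤ ∑ q ∈ range (s + 1), (s.choose q : ℝ) * J q :=
        sum_le_sum_of_subset_of_nonneg (range_subset_range.mpr (by omega))
          fun q _ _ => mul_nonneg (Nat.cast_nonneg _) (hJ q)

theorem expected_dropout_interaction_le (s : ℕ) (p : ℝ)
    (hp0 : 0 ≤ p) (hp1 : p ≤ 1) (J : ℕ → ℝ) (hJ : ∀ q, 0 ≤ J q) :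
    (∑ r ∈ Finset.range (s + 1),
        (s.choose r : ℝ) * p ^ r * (1 - p) ^ (s - r) *
          ∑ q ∈ Finset.range (r + 1), (r.choose q : ℝ) * J q) ≤
      (∑ q ∈ Finset.range (s + 1), (s.choose q : ℝ) * J q) ∧
    (p = 1 →
      (∑ r ∈ Finset.range (s + 1),
          (s.choose r : ℝ) * p ^ r * (1 - p) ^ (s - r) *
            ∑ q ∈ Finset.range (r + 1), (r.choose q : ℝ) * J q) =
        ∑ q ∈ Finset.range (s + 1), (s.choose q : ℝ) * J q) := by
  refine ⟨sum_binomial_mul_le_of_monotone s hp0 hp1 (monotone_sum_range_choose_mul hJ), ?_⟩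
  rintro rfl
  exact sum_binomial_one_mul s _
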